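/- arXiv:1305.6604 — 2 statements merged into one kernel-verified Lean document; each statement's English description precedes it below -/
import Mathlib

section
/- Every positive multiple of 4 is a local minimum of the negligibility function: for every j ≥ 1, p(4j − 1) ≥ p(4j) and p(4j) ≤ p(4j + 1). Moreover, if q is the degree position such that 4j has its least significant 1 in position q (so q ≥ 3), then p(4j) − p(4j − 1) = 2 − q(q−1)/2 ≤ 0. -/
/-!
Appending a binary digit `b` below `m` moves every digit of `m` up one position, so
`p(2m + b) = p(m) + s(m) + 2b`, where `s` is the binary digit sum. Write `4j = 2^v t` with
`t` odd and `v ≥ 2`: then `4j` ends in `10…0` and `4j − 1` in `01…1` (`v` trailing digits).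
Each doubling adds `v + 1` more to `p(4j − 1)` than to `p(4j)`, which gives
`2 (p(2^v t) − p(2^v t − 1)) = 4 − v(v+1) < 0`; and `p(2m + 1) = p(2m) + 2`.
-/

/-- The negligibility of `m`: `p(m) = Σ_k (k+1)·m_k`, where `m_k` is the binary digit
of `m` at position `k ≥ 1` (least significant first). -/
def neg (m : ℕ) : ℕ := (((Nat.digits 2 m).zipIdx.map Prod.swap).map fun p => (p.1 + 2) * p.2).sum

lemma digits_two_mul_add {m b : ℕ} (hb : b < 2) (h : b ≠ 0 ∨ m ≠ 0) :
    Nat.digits 2 (2 * m + b) = b :: Nat.digits 2 m := by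
  rw [add_comm, Nat.digits_add 2 one_lt_two b m hb h]

lemma digits_sum_two_mul_add {m b : ℕ} (hb : b < 2) :
    (Nat.digits 2 (2 * m + b)).sum = (Nat.digits 2 m).sum + b := by
  rcases em (b = 0 ∧ m = 0) with ⟨rfl, rfl⟩ | h
  · simp
  · rw [digits_two_mul_add hb (by tauto), List.sum_cons, add_comm]

lemma neg_two_mul_add {m b : ℕ} (hb : b < 2) :
    neg (2 * m + b) = neg m + (Nat.digits 2 m).sum + 2 * b := by
  rcases em (b = 0 ∧ m = 0) with ⟨rfl, rfl⟩ | h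
  · simp [neg]
  · rw [neg, digits_two_mul_add hb (by tauto), neg]
    simp only [add_mul, List.zipIdx_cons, zero_add, List.zipIdx_succ, List.map_cons,
      Prod.swap_prod_mk, List.map_map, Function.comp_def, zero_mul, one_mul, List.sum_cons,
      List.sum_map_add, List.zipIdx_map_fst, Prod.fst_swap, Prod.snd_swap]
    ring

lemma digits_sum_two_pow_mul (v n : ℕ) :
    (Nat.digits 2 (2 ^ v * n)).sum = (Nat.digits 2 n).sum := by
  induction v with
  | zero => simp
  | succ v ih =>
    rw [pow_succ', mul_assoc, ← add_zero (2 * _), digits_sum_two_mul_add two_pos, ih, add_zero]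

lemma digits_sum_two_pow_mul_sub_one (v : ℕ) {n : ℕ} (hn : n ≠ 0) :
    (Nat.digits 2 (2 ^ v * n - 1)).sum = v + (Nat.digits 2 (n - 1)).sum := by
  induction v with
  | zero => simp
  | succ v ih =>
    have hpos : 0 < 2 ^ v * n := by positivity
    rw [show 2 ^ (v + 1) * n - 1 = 2 * (2 ^ v * n - 1) + 1 by rw [pow_succ', mul_assoc]; omega,
      digits_sum_two_mul_add one_lt_two, ih]
    ring

lemma neg_two_mul_add_one (m : ℕ) : neg (2 * m + 1) = neg (2 * m) + 2 := by
  rw [neg_two_mul_add one_lt_two, ← add_zero (2 * m), neg_two_mul_add two_pos]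
  ring

lemma two_mul_neg_sub_neg_pred (v s : ℕ) :
    2 * ((neg (2 ^ v * (2 * s + 1)) : ℤ) - neg (2 ^ v * (2 * s + 1) - 1)) = 4 - v * (v + 1) := by
  induction v with
  | zero => simp [neg_two_mul_add_one]
  | succ v ih =>
    set t := 2 * s + 1
    have hpos : 0 < 2 ^ v * t := by positivity
    have hA : neg (2 ^ (v + 1) * t) = neg (2 ^ v * t) + (Nat.digits 2 t).sum := by
      rw [pow_succ', mul_assoc, ← add_zero (2 * _), neg_two_mul_add two_pos,
        digits_sum_two_pow_mul]
      ring
    have hB : neg (2 ^ (v + 1) * t - 1) =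
        neg (2 ^ v * t - 1) + v + (Nat.digits 2 (t - 1)).sum + 2 := by
      rw [show 2 ^ (v + 1) * t - 1 = 2 * (2 ^ v * t - 1) + 1 by rw [pow_succ', mul_assoc]; omega,
        neg_two_mul_add one_lt_two, digits_sum_two_pow_mul_sub_one v (by omega)]
      ring
    have hdigits : (Nat.digits 2 t).sum = (Nat.digits 2 (t - 1)).sum + 1 := by
      rw [show t - 1 = 2 * s + 0 by omega, digits_sum_two_mul_add one_lt_two,
        digits_sum_two_mul_add two_pos]
      ring
    rw [hA, hB, hdigits]
    push_cast
    linear_combination ih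

lemma exists_eq_two_pow_factorization_mul_odd {n : ℕ} (hn : n ≠ 0) :
    ∃ s, n = 2 ^ n.factorization 2 * (2 * s + 1) := by
  have hodd : ¬ 2 ∣ n / 2 ^ n.factorization 2 := Nat.not_dvd_ordCompl Nat.prime_two hn
  refine ⟨n / 2 ^ n.factorization 2 / 2, ?_⟩
  rw [show 2 * (n / 2 ^ n.factorization 2 / 2) + 1 = n / 2 ^ n.factorization 2 by omega,
    Nat.ordProj_mul_ordCompl_eq_self]

/-- every positive multiple of 4 is a local minimum of the negligibility:
`p(4j − 1) ≥ p(4j)` and `p(4j) ≤ p(4j + 1)` for every `j ≥ 1`.  Moreover, if `q` is the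
position of the least significant `1` in the binary expansion of `4j` (so `q ≥ 3`), then
`p(4j) − p(4j − 1) = 2 − q(q−1)/2 ≤ 0`. -/
theorem mult_four_local_min (j : ℕ) (hj : 1 ≤ j) :
    (neg (4 * j - 1) ≥ neg (4 * j) ∧ neg (4 * j) ≤ neg (4 * j + 1)) ∧
    ∀ q : ℕ, q = (4 * j).factorization 2 + 1 →
      3 ≤ q ∧
      (neg (4 * j) : ℤ) - (neg (4 * j - 1) : ℤ) = 2 - (q * (q - 1)) / 2 ∧
      (neg (4 * j) : ℤ) - (neg (4 * j - 1) : ℤ) ≤ 0 := by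
  set v := (4 * j).factorization 2
  obtain ⟨s, hs⟩ := exists_eq_two_pow_factorization_mul_odd (n := 4 * j) (by omega)
  have hv : 2 ≤ v := (Nat.prime_two.pow_dvd_iff_le_factorization (by omega)).mp (Dvd.intro j rfl)
  have hjump := two_mul_neg_sub_neg_pred v s
  rw [← hs] at hjump
  have hvv : (4 : ℤ) ≤ v * (v + 1) := by norm_cast; nlinarith
  have hsucc : neg (4 * j + 1) = neg (4 * j) + 2 := by
    rw [show 4 * j = 2 * (2 * j) by ring, neg_two_mul_add_one]
  refine ⟨⟨by omega, by omega⟩, fun q hq => ⟨by omega, ?_, by omega⟩⟩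
  have hq2 : (q : ℤ) * (q - 1) = 2 * (2 - ((neg (4 * j) : ℤ) - neg (4 * j - 1))) := by
    rw [hq]; push_cast; linear_combination hjump
  rw [hq2, Int.mul_ediv_cancel_left _ two_ne_zero]
  ring
end

section
/- For a Paley-ordered Walsh index m of rank r = r(m), the Walsh function w_m annihilates all polynomials of degree less than r: for every integer 0 ≤ k < r, ∫_0^1 t^k w_m(t) dt = 0. -/
/-!
Halving the variable refines Walsh functions: for `s ∈ [0, 1)`, `w_m (s / 2) = w_{m/2} s` and
`w_m ((s + 1) / 2) = (-1)^{m₀} w_{m/2} s`, where `m₀ = m % 2`. Hence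
`2^{k+1} ∫₀¹ t^k w_m = ∫₀¹ (s^k ± (s + 1)^k) w_{m/2}`, while `rank m = m₀ + rank (m / 2)`.
If `m₀ = 0` the rank and the degree are unchanged; if `m₀ = 1` both drop by one, the leading
terms of `s^k - (s + 1)^k` cancelling. Induction on `m` concludes.
-/

/-- The rank of `m`: the number of ones in the binary expansion of `m`. -/
def rank (m : ℕ) : ℕ := (Nat.digits 2 m).sum

/-- The `m`'th Paley-ordered Walsh function on `[0,1]`:
`w_m(t) = Π_k R_k(t)^{m_k}` where `m_k` is the binary digit of `m` at position `k ≥ 1`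
(least significant first) and `R_k(t) = (−1)^{⌊2^k t⌋}` is the `k`'th Rademacher
function. -/
noncomputable def walsh (m : ℕ) (t : ℝ) : ℝ :=
  ∏ i ∈ Finset.range (Nat.digits 2 m).length,
    ((-1 : ℝ) ^ ⌊(2 : ℝ) ^ (i + 1) * t⌋) ^ ((Nat.digits 2 m).getD i 0)

open Set MeasureTheory

lemma rank_eq_mod_two_add_rank_div_two (m : ℕ) : rank m = m % 2 + rank (m / 2) := by
  rcases Nat.eq_zero_or_pos m with rfl | hm
  · rfl
  · simp [rank, Nat.digits_def' one_lt_two hm]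

lemma walsh_eq_mul_walsh_div_two (m : ℕ) (t : ℝ) :
    walsh m t = ((-1) ^ ⌊2 * t⌋) ^ (m % 2) * walsh (m / 2) (2 * t) := by
  rcases Nat.eq_zero_or_pos m with rfl | hm
  · simp [walsh]
  · rw [walsh, Nat.digits_def' one_lt_two hm, List.length_cons, Finset.prod_range_succ', mul_comm]
    simp [walsh, pow_succ, mul_assoc]

lemma walsh_add_one (m : ℕ) (t : ℝ) : walsh m (t + 1) = walsh m t := by
  refine Finset.prod_congr rfl fun i _ => ?_
  have hev : Even ((2 : ℤ) ^ (i + 1)) := even_two.pow_of_ne_zero i.succ_ne_zero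
  rw [mul_add, mul_one, ← Int.cast_two (R := ℝ), ← Int.cast_pow, Int.floor_add_intCast,
    zpow_add₀ (by norm_num), hev.neg_one_zpow, mul_one, Int.cast_pow, Int.cast_two]

lemma walsh_div_two {m : ℕ} {s : ℝ} (hs : s ∈ Ico 0 1) : walsh m (s / 2) = walsh (m / 2) s := by
  rw [walsh_eq_mul_walsh_div_two, mul_div_cancel₀ s two_ne_zero, Int.floor_eq_zero_iff.2 hs]
  simp

lemma walsh_add_one_div_two {m : ℕ} {s : ℝ} (hs : s ∈ Ico 0 1) :
    walsh m ((s + 1) / 2) = (-1) ^ (m % 2) * walsh (m / 2) s := by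
  rw [walsh_eq_mul_walsh_div_two, mul_div_cancel₀ _ two_ne_zero, Int.floor_add_one,
    Int.floor_eq_zero_iff.2 hs, walsh_add_one]
  simp

lemma abs_walsh (m : ℕ) (t : ℝ) : |walsh m t| = 1 := by
  simp [walsh, Finset.abs_prod]

lemma measurable_walsh (m : ℕ) : Measurable (walsh m) := by
  unfold walsh
  fun_prop

lemma intervalIntegrable_walsh (m : ℕ) (a b : ℝ) : IntervalIntegrable (walsh m) volume a b :=
  (intervalIntegrable_const (c := (1 : ℝ))).mono_fun (measurable_walsh m).aestronglyMeasurable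
    (Filter.Eventually.of_forall fun t => by simp [abs_walsh])

lemma integral_zero_one_congr_Ico {f g : ℝ → ℝ} (h : ∀ s ∈ Ico (0 : ℝ) 1, f s = g s) :
    ∫ s in (0 : ℝ)..1, f s = ∫ s in (0 : ℝ)..1, g s := by
  refine intervalIntegral.integral_congr_ae ?_
  filter_upwards [volume.ae_ne 1] with s hs1 hs
  rw [uIoc_of_le zero_le_one] at hs
  exact h s ⟨hs.1.le, hs.2.lt_of_ne hs1⟩

lemma integral_zero_one_eq_halves {f : ℝ → ℝ} (hf : IntervalIntegrable f volume 0 1) :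
    ∫ t in (0 : ℝ)..1, f t =
      (∫ s in (0 : ℝ)..1, f (s / 2)) / 2 + (∫ s in (0 : ℝ)..1, f ((s + 1) / 2)) / 2 := by
  have h₁ : ∫ s in (0 : ℝ)..1, f (s / 2) = 2 * ∫ t in (0 : ℝ)..1 / 2, f t := by
    simp [intervalIntegral.integral_comp_div]
  have h₂ : ∫ s in (0 : ℝ)..1, f ((s + 1) / 2) = 2 * ∫ t in (1 / 2 : ℝ)..1, f t := by
    simp_rw [add_div]
    rw [intervalIntegral.integral_comp_div_add _ two_ne_zero]
    norm_num
  rw [h₁, h₂, mul_div_cancel_left₀ _ two_ne_zero, mul_div_cancel_left₀ _ two_ne_zero,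
    intervalIntegral.integral_add_adjacent_intervals (hf.mono_set ?_) (hf.mono_set ?_)]
  all_goals exact uIcc_subset_uIcc (by norm_num [mem_uIcc]) (by norm_num [mem_uIcc])

lemma integral_add_one_pow_mul_eq {f : ℝ → ℝ} {r k : ℕ} (hf : IntervalIntegrable f volume 0 1)
    (hr : ∀ j < r, ∫ t in (0 : ℝ)..1, t ^ j * f t = 0) (hk : k ≤ r) :
    ∫ t in (0 : ℝ)..1, (t + 1) ^ k * f t = ∫ t in (0 : ℝ)..1, t ^ k * f t := by
  have hint (j : ℕ) : IntervalIntegrable (fun t => t ^ j * f t) volume 0 1 :=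
    hf.continuousOn_mul (continuous_pow j).continuousOn
  simp_rw [add_pow, one_pow, mul_one, Finset.sum_mul, mul_right_comm _ (Nat.choose _ _ : ℝ)]
  rw [intervalIntegral.integral_finsetSum fun j _ => (hint j).mul_const _,
    Finset.sum_range_succ, Finset.sum_eq_zero fun j hj => ?_]
  · simp
  · rw [intervalIntegral.integral_mul_const, hr j (by simp at hj; omega), zero_mul]

lemma integral_pow_mul_walsh (m k : ℕ) :
    ∫ t in (0 : ℝ)..1, t ^ k * walsh m t =
      ((∫ t in (0 : ℝ)..1, t ^ k * walsh (m / 2) t) +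
        (-1) ^ (m % 2) * ∫ t in (0 : ℝ)..1, (t + 1) ^ k * walsh (m / 2) t) / 2 ^ (k + 1) := by
  have h₁ : ∫ s in (0 : ℝ)..1, (s / 2) ^ k * walsh m (s / 2) =
      (∫ s in (0 : ℝ)..1, s ^ k * walsh (m / 2) s) / 2 ^ k := by
    rw [← intervalIntegral.integral_div]
    exact integral_zero_one_congr_Ico fun s hs => by
      rw [walsh_div_two hs, div_pow, div_mul_eq_mul_div]
  have h₂ : ∫ s in (0 : ℝ)..1, ((s + 1) / 2) ^ k * walsh m ((s + 1) / 2) =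
      (-1) ^ (m % 2) * (∫ s in (0 : ℝ)..1, (s + 1) ^ k * walsh (m / 2) s) / 2 ^ k := by
    rw [← intervalIntegral.integral_const_mul, ← intervalIntegral.integral_div]
    exact integral_zero_one_congr_Ico fun s hs => by
      rw [walsh_add_one_div_two hs, div_pow]
      ring
  rw [integral_zero_one_eq_halves
      ((intervalIntegrable_walsh m 0 1).continuousOn_mul (continuous_pow k).continuousOn), h₁, h₂]
  ring

/-- a Walsh function of rank `r` annihilates all monomials (hence all
polynomials) of degree less than `r`: `∫_0^1 t^k w_m(t) dt = 0` for `0 ≤ k < r(m)`. -/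
theorem walsh_annihilates_polynomials (m k : ℕ) (hk : k < rank m) :
    ∫ t in (0:ℝ)..1, t ^ k * walsh m t = 0 := by
  induction m using Nat.strong_induction_on generalizing k with
  | _ m ih =>
    have hm : 0 < m := Nat.pos_of_ne_zero (by rintro rfl; simp [rank] at hk)
    have hrank := rank_eq_mod_two_add_rank_div_two m
    have ih' (j : ℕ) (hj : j < rank (m / 2)) : ∫ t in (0 : ℝ)..1, t ^ j * walsh (m / 2) t = 0 :=
      ih _ (Nat.div_lt_self hm one_lt_two) j hj
    rw [integral_pow_mul_walsh,
      integral_add_one_pow_mul_eq (intervalIntegrable_walsh (m / 2) 0 1) ih' (by omega)]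
    rcases Nat.mod_two_eq_zero_or_one m with h | h
    · rw [h, ih' k (by omega)]
      simp
    · rw [h]
      ring
end
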